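/- arXiv:1909.07923 — 4 statements merged into one kernel-verified Lean document; each statement's English description precedes it below -/
import Mathlib

section
/- Let f : ℝ³ → ℝ be a smooth (C^∞) function with compact support, and let r : ℝ⁴ → ℝ be its John transform, r(x,y,u,v) = ∫_ℝ f(x + u·z, y + v·z, z) dz. Then r satisfies John's equation: for every (x,y,u,v) ∈ ℝ⁴, ∂²r/∂y∂u (x,y,u,v) = ∂²r/∂x∂v (x,y,u,v); equivalently (∂_y ∂_u − ∂_x ∂_v) r = 0. -/
open MeasureTheory

/-- Bound for a continuous compactly supported function. -/
lemma bound_of_cc {E F : Type*} [NormedAddCommGroup E] [TopologicalSpace F]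
    (g : F → E) (hg : Continuous g) (hs : HasCompactSupport g) :
    ∃ C : ℝ, 0 ≤ C ∧ ∀ q, ‖g q‖ ≤ C := by
  obtain ⟨C, hC⟩ := hs.exists_bound_of_continuousOn hg.continuousOn
  refine ⟨max C 0, le_max_right _ _, fun q => ?_⟩
  by_cases hq : q ∈ tsupport g
  · exact (hC q hq).trans (le_max_left _ _)
  · simp [image_eq_zero_of_notMem_tsupport hq]

/-- Differentiation under the integral sign for the John transform setup. -/
lemma john_aux (g : ℝ × ℝ × ℝ → ℝ) (hg : ContDiff ℝ 1 g) (hs : HasCompactSupport g)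
    (c : ℝ → ℝ) (hc : Continuous c)
    (p d : ℝ → ℝ × ℝ × ℝ) (hp : Continuous p) (hd : Continuous d)
    (hpz : ∀ z, (p z).2.2 = z) (hdz : ∀ z, (d z).2.2 = 0) (t₀ : ℝ) :
    HasDerivAt (fun t => ∫ z : ℝ, c z * g (p z + t • d z))
      (∫ z : ℝ, c z * fderiv ℝ g (p z + t₀ • d z) (d z)) t₀ := by
  -- third coordinate of the argument is always z
  have hthird : ∀ (t : ℝ) z, (p z + t • d z).2.2 = z := by
    intro t z
    simp [Prod.snd_add, hpz z, hdz z]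
  -- radius of the support
  obtain ⟨R, hR0, hR⟩ : ∃ R : ℝ, 0 ≤ R ∧ ∀ q ∈ tsupport g, |q.2.2| ≤ R := by
    obtain ⟨R, hR⟩ := hs.isBounded.subset_closedBall 0
    refine ⟨max R 0, le_max_right _ _, fun q hq => ?_⟩
    have : ‖q‖ ≤ R := by simpa using hR hq
    calc |q.2.2| ≤ ‖q.2‖ := norm_snd_le q.2
      _ ≤ ‖q‖ := norm_snd_le q
      _ ≤ max R 0 := this.trans (le_max_left _ _)
  have hgz : ∀ (t : ℝ) z, |z| > R → g (p z + t • d z) = 0 := by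
    intro t z hz
    apply image_eq_zero_of_notMem_tsupport
    intro hmem
    have h' := hR _ hmem
    rw [hthird t z] at h'
    exact absurd h' (not_le.2 hz)
  have hg'z : ∀ (t : ℝ) z, |z| > R → fderiv ℝ g (p z + t • d z) = 0 := by
    intro t z hz
    by_contra h
    have hmem : (p z + t • d z) ∈ tsupport g :=
      support_fderiv_subset ℝ (f := g) h
    have h' := hR _ hmem
    rw [hthird t z] at h'
    exact absurd h' (not_le.2 hz)
  -- bounds
  obtain ⟨C₁, hC₁0, hC₁⟩ := bound_of_cc (fderiv ℝ g) (hg.continuous_fderiv one_ne_zero) (hs.fderiv ℝ)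
  obtain ⟨M₁, hM₁⟩ := isCompact_Icc.exists_bound_of_continuousOn
    (s := Set.Icc (-R) R) hc.continuousOn
  obtain ⟨M₂, hM₂⟩ := isCompact_Icc.exists_bound_of_continuousOn
    (s := Set.Icc (-R) R) hd.continuousOn
  set B : ℝ := max M₁ 0 * (C₁ * max M₂ 0) with hB
  have hB0 : 0 ≤ B := by positivity
  set bound : ℝ → ℝ := Set.indicator (Set.Icc (-R) R) (fun _ => B) with hbound
  have cont_arg : ∀ t : ℝ, Continuous fun z => p z + t • d z := fun t =>
    hp.add (hd.const_smul t)
  have hFC : ∀ t : ℝ, Continuous fun z => c z * g (p z + t • d z) := fun t =>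
    hc.mul ((hg.continuous).comp (cont_arg t))
  have key := hasDerivAt_integral_of_dominated_loc_of_deriv_le
    (F := fun t z => c z * g (p z + t • d z))
    (F' := fun t z => c z * fderiv ℝ g (p z + t • d z) (d z))
    (x₀ := t₀) (bound := bound) (μ := volume) (s := Metric.ball t₀ 1) (Metric.ball_mem_nhds t₀ one_pos)
    (Filter.Eventually.of_forall fun t => (hFC t).aestronglyMeasurable)
    ?_ ?_ ?_ ?_ ?_
  · exact key.2
  · -- integrability of F t₀
    apply ((hFC t₀).integrable_of_hasCompactSupport)
    apply HasCompactSupport.intro (isCompact_Icc (a := -R) (b := R))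
    intro z hz
    have : |z| > R := by
      rw [Set.mem_Icc, not_and_or] at hz
      rcases hz with h | h
      · have h' := not_le.1 h
        exact lt_of_lt_of_le (by linarith) (neg_le_abs z)
      · exact lt_of_lt_of_le (not_le.1 h) (le_abs_self z)
    simp [hgz t₀ z this]
  · -- measurability of F' t₀
    exact (hc.mul (((hg.continuous_fderiv one_ne_zero).comp (cont_arg t₀)).clm_apply
      hd)).aestronglyMeasurable
  · -- bound
    refine Filter.Eventually.of_forall fun z => fun t _ => ?_
    by_cases hz : z ∈ Set.Icc (-R) R
    · have habs : |z| ≤ R := abs_le.2 ⟨(Set.mem_Icc.1 hz).1, (Set.mem_Icc.1 hz).2⟩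
      have h1 : |c z| ≤ max M₁ 0 := le_max_of_le_left (by simpa using hM₁ z hz)
      have h2 : ‖d z‖ ≤ max M₂ 0 := le_max_of_le_left (hM₂ z hz)
      have h3 : ‖fderiv ℝ g (p z + t • d z) (d z)‖ ≤ C₁ * max M₂ 0 := by
        calc ‖fderiv ℝ g (p z + t • d z) (d z)‖
            ≤ ‖fderiv ℝ g (p z + t • d z)‖ * ‖d z‖ :=
              ContinuousLinearMap.le_opNorm _ _
          _ ≤ C₁ * max M₂ 0 := mul_le_mul (hC₁ _) h2 (norm_nonneg _) hC₁0
      rw [hbound, Set.indicator_of_mem hz]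
      calc ‖c z * fderiv ℝ g (p z + t • d z) (d z)‖
          = |c z| * ‖fderiv ℝ g (p z + t • d z) (d z)‖ := by
            simp [abs_mul]
        _ ≤ max M₁ 0 * (C₁ * max M₂ 0) :=
            mul_le_mul h1 h3 (norm_nonneg _) (le_max_right _ _)
    · have habs : |z| > R := by
        rw [Set.mem_Icc, not_and_or] at hz
        rcases hz with h | h
        · have h' := not_le.1 h
          exact lt_of_lt_of_le (by linarith) (neg_le_abs z)
        · exact lt_of_lt_of_le (not_le.1 h) (le_abs_self z)
      rw [hbound, Set.indicator_of_notMem hz]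
      simp [hg'z t z habs]
  · -- integrability of bound
    rw [hbound]
    exact (integrableOn_const measure_Icc_lt_top.ne).integrable_indicator
      measurableSet_Icc
  · -- differentiability in t
    refine Filter.Eventually.of_forall fun z => fun t _ => ?_
    have h1 : HasDerivAt (fun t : ℝ => p z + t • d z) (d z) t := by
      simpa using ((hasDerivAt_id t).smul_const (d z)).const_add (p z)
    have h2 := ((hg.differentiable one_ne_zero) (p z + t • d z)).hasFDerivAt.comp_hasDerivAt t h1
    exact h2.const_mul (c z)

/-- The John transform `r` of a smooth compactly supported function
`f : ℝ³ → ℝ` satisfies John's equation `(∂_y ∂_u − ∂_x ∂_v) r = 0`. -/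
theorem john_transform_satisfies_john_equation
    (f : ℝ × ℝ × ℝ → ℝ) (hf : ContDiff ℝ (⊤ : ℕ∞) f) (hsupp : HasCompactSupport f)
    (r : ℝ → ℝ → ℝ → ℝ → ℝ)
    (hr : ∀ x y u v : ℝ, r x y u v = ∫ z : ℝ, f (x + u * z, y + v * z, z)) :
    ∀ x y u v : ℝ,
      deriv (fun y' => deriv (fun u' => r x y' u' v) u) y
        = deriv (fun x' => deriv (fun v' => r x' y u v') v) x := by
  intro x y u v
  set c₁ : ℝ × ℝ × ℝ := (1, 0, 0) with hc₁def
  set c₂ : ℝ × ℝ × ℝ := (0, 1, 0) with hc₂def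
  set f₁ : ℝ × ℝ × ℝ → ℝ := fun q => fderiv ℝ f q c₁ with hf₁def
  set f₂ : ℝ × ℝ × ℝ → ℝ := fun q => fderiv ℝ f q c₂ with hf₂def
  have hfd : ContDiff ℝ (⊤ : ℕ∞) (fderiv ℝ f) := hf.fderiv_right (by simp)
  have hf₁ : ContDiff ℝ 1 f₁ := (hfd.of_le (by simp)).clm_apply contDiff_const
  have hf₂ : ContDiff ℝ 1 f₂ := (hfd.of_le (by simp)).clm_apply contDiff_const
  have hs₁ : HasCompactSupport f₁ := by
    have := (hsupp.fderiv ℝ).comp_left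
      (g := fun L : (ℝ × ℝ × ℝ) →L[ℝ] ℝ => L c₁) (by simp)
    exact this
  have hs₂ : HasCompactSupport f₂ := by
    have := (hsupp.fderiv ℝ).comp_left
      (g := fun L : (ℝ × ℝ × ℝ) →L[ℝ] ℝ => L c₂) (by simp)
    exact this
  have e₁ : ∀ (q : ℝ × ℝ × ℝ) (z : ℝ),
      fderiv ℝ f q ((z : ℝ), (0 : ℝ), (0 : ℝ)) = z * f₁ q := by
    intro q z
    have hz : ((z : ℝ), (0 : ℝ), (0 : ℝ)) = z • c₁ := by
      simp [hc₁def, Prod.smul_mk]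
    rw [hz, ContinuousLinearMap.map_smul, smul_eq_mul, hf₁def]
  have e₂ : ∀ (q : ℝ × ℝ × ℝ) (z : ℝ),
      fderiv ℝ f q ((0 : ℝ), (z : ℝ), (0 : ℝ)) = z * f₂ q := by
    intro q z
    have hz : ((0 : ℝ), (z : ℝ), (0 : ℝ)) = z • c₂ := by
      simp [hc₂def, Prod.smul_mk]
    rw [hz, ContinuousLinearMap.map_smul, smul_eq_mul, hf₂def]
  -- Step A : derivative in u
  have stepA : ∀ x y v u : ℝ,
      HasDerivAt (fun u' => ∫ z : ℝ, f (x + u' * z, y + v * z, z))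
        (∫ z : ℝ, z * f₁ (x + u * z, y + v * z, z)) u := by
    intro x y v u
    have h := john_aux f (hf.of_le (by simp)) hsupp (fun _ => 1) continuous_const
      (fun z => (x, y + v * z, z)) (fun z => ((z : ℝ), (0 : ℝ), (0 : ℝ)))
      (by fun_prop) (by fun_prop) (fun z => rfl) (fun z => rfl) u
    have key : ∀ (t z : ℝ),
        ((x, y + v * z, z) : ℝ × ℝ × ℝ) + t • ((z : ℝ), (0 : ℝ), (0 : ℝ))
          = (x + t * z, y + v * z, z) := by
      intro t z
      simp [Prod.ext_iff]
    simp only [one_mul, key, e₁] at h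
    exact h
  -- Step C : derivative in v
  have stepC : ∀ x y v u : ℝ,
      HasDerivAt (fun v' => ∫ z : ℝ, f (x + u * z, y + v' * z, z))
        (∫ z : ℝ, z * f₂ (x + u * z, y + v * z, z)) v := by
    intro x y v u
    have h := john_aux f (hf.of_le (by simp)) hsupp (fun _ => 1) continuous_const
      (fun z => (x + u * z, y, z)) (fun z => ((0 : ℝ), (z : ℝ), (0 : ℝ)))
      (by fun_prop) (by fun_prop) (fun z => rfl) (fun z => rfl) v
    have key : ∀ (t z : ℝ),
        ((x + u * z, y, z) : ℝ × ℝ × ℝ) + t • ((0 : ℝ), (z : ℝ), (0 : ℝ))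
          = (x + u * z, y + t * z, z) := by
      intro t z
      simp [Prod.ext_iff]
    simp only [one_mul, key, e₂] at h
    exact h
  -- Step B : derivative in y of the Step A integral
  have stepB : HasDerivAt (fun y' => ∫ z : ℝ, z * f₁ (x + u * z, y' + v * z, z))
      (∫ z : ℝ, z * fderiv ℝ f₁ (x + u * z, y + v * z, z) c₂) y := by
    have h := john_aux f₁ hf₁ hs₁ id continuous_id
      (fun z => (x + u * z, v * z, z)) (fun _ => c₂)
      (by fun_prop) continuous_const (fun z => rfl) (fun z => rfl) y
    have key : ∀ (t z : ℝ),
        ((x + u * z, v * z, z) : ℝ × ℝ × ℝ) + t • c₂ = (x + u * z, t + v * z, z) := by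
      intro t z
      simp [hc₂def, Prod.ext_iff, add_comm]
    simp only [id_eq, key] at h
    exact h
  -- Step D : derivative in x of the Step C integral
  have stepD : HasDerivAt (fun x' => ∫ z : ℝ, z * f₂ (x' + u * z, y + v * z, z))
      (∫ z : ℝ, z * fderiv ℝ f₂ (x + u * z, y + v * z, z) c₁) x := by
    have h := john_aux f₂ hf₂ hs₂ id continuous_id
      (fun z => (u * z, y + v * z, z)) (fun _ => c₁)
      (by fun_prop) continuous_const (fun z => rfl) (fun z => rfl) x
    have key : ∀ (t z : ℝ),
        ((u * z, y + v * z, z) : ℝ × ℝ × ℝ) + t • c₁ = (t + u * z, y + v * z, z) := by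
      intro t z
      simp [hc₁def, Prod.ext_iff, add_comm]
    simp only [id_eq, key] at h
    exact h
  -- rewrite the inner derivatives
  have hL : (fun y' => deriv (fun u' => r x y' u' v) u)
      = fun y' => ∫ z : ℝ, z * f₁ (x + u * z, y' + v * z, z) := by
    funext y'
    have h0 : (fun u' => r x y' u' v) = fun u' => ∫ z : ℝ, f (x + u' * z, y' + v * z, z) :=
      funext fun u' => hr x y' u' v
    rw [h0, (stepA x y' v u).deriv]
  have hRR : (fun x' => deriv (fun v' => r x' y u v') v)
      = fun x' => ∫ z : ℝ, z * f₂ (x' + u * z, y + v * z, z) := by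
    funext x'
    have h0 : (fun v' => r x' y u v') = fun v' => ∫ z : ℝ, f (x' + u * z, y + v' * z, z) :=
      funext fun v' => hr x' y u v'
    rw [h0, (stepC x' y v u).deriv]
  rw [hL, hRR, stepB.deriv, stepD.deriv]
  -- Schwarz symmetry of second derivatives
  have symm : ∀ q : ℝ × ℝ × ℝ, fderiv ℝ f₁ q c₂ = fderiv ℝ f₂ q c₁ := by
    intro q
    have hdf : HasFDerivAt (fderiv ℝ f) (fderiv ℝ (fderiv ℝ f) q) q :=
      ((hfd.differentiable (by simp)) q).hasFDerivAt
    have h1 : HasFDerivAt f₁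
        ((ContinuousLinearMap.apply ℝ ℝ c₁).comp (fderiv ℝ (fderiv ℝ f) q)) q :=
      (ContinuousLinearMap.apply ℝ ℝ c₁).hasFDerivAt.comp q hdf
    have h2 : HasFDerivAt f₂
        ((ContinuousLinearMap.apply ℝ ℝ c₂).comp (fderiv ℝ (fderiv ℝ f) q)) q :=
      (ContinuousLinearMap.apply ℝ ℝ c₂).hasFDerivAt.comp q hdf
    rw [h1.fderiv, h2.fderiv]
    simp only [ContinuousLinearMap.coe_comp', Function.comp_apply,
      ContinuousLinearMap.apply_apply]
    exact second_derivative_symmetric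
      (fun p => ((hf.differentiable (by simp)) p).hasFDerivAt) hdf c₂ c₁
  apply integral_congr_ae
  filter_upwards with z
  rw [symm]
end

section
/- Let f : ℝ³ → ℝ be a smooth (C^∞) function with compact support, let r(x,y,u,v) = ∫_ℝ f(x + u·z, y + v·z, z) dz be its John transform, and define r̃(ξ₁, ξ₂, ξ₃, ξ₄) = r(ξ₃ − ξ₄, ξ₁ − ξ₂, ξ₁ + ξ₂, ξ₃ + ξ₄). Then r̃ satisfies the ultrahyperbolic equation (∂²_{ξ₁ξ₁} − ∂²_{ξ₂ξ₂} − ∂²_{ξ₃ξ₃} + ∂²_{ξ₄ξ₄}) r̃ = 0 on ℝ⁴. -/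
open MeasureTheory

noncomputable section JohnAux

/-- The point on the line: `(a + s*p + (u+s*q)*z, b + s*p' + (v+s*q')*z, z)`. -/
def Apt (a u b v p q p' q' s z : ℝ) : ℝ × ℝ × ℝ :=
  (a + s * p + (u + s * q) * z, b + s * p' + (v + s * q') * z, z)

/-- The direction vector of the line. -/
def wv (p q p' q' z : ℝ) : ℝ × ℝ × ℝ := (p + q * z, p' + q' * z, 0)

lemma continuous_Apt (a u b v p q p' q' s : ℝ) :
    Continuous (fun z => Apt a u b v p q p' q' s z) := by
  unfold Apt; fun_prop

lemma continuous_wv (p q p' q' : ℝ) : Continuous (fun z => wv p q p' q' z) := by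
  unfold wv; fun_prop

lemma hasDerivAt_Apt (a u b v p q p' q' s z : ℝ) :
    HasDerivAt (fun s => Apt a u b v p q p' q' s z) (wv p q p' q' z) s := by
  have h1 : HasDerivAt (fun s : ℝ => a + s * p + (u + s * q) * z) (p + q * z) s := by
    have h : HasDerivAt (fun s : ℝ => (a + u * z) + s * (p + q * z)) (1 * (p + q * z)) s :=
      ((hasDerivAt_id s).mul_const _).const_add _
    have e : (fun s : ℝ => a + s * p + (u + s * q) * z)
        = fun s : ℝ => (a + u * z) + s * (p + q * z) := by funext t; ring
    rw [e]; simpa using h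
  have h2 : HasDerivAt (fun s : ℝ => b + s * p' + (v + s * q') * z) (p' + q' * z) s := by
    have h : HasDerivAt (fun s : ℝ => (b + v * z) + s * (p' + q' * z)) (1 * (p' + q' * z)) s :=
      ((hasDerivAt_id s).mul_const _).const_add _
    have e : (fun s : ℝ => b + s * p' + (v + s * q') * z)
        = fun s : ℝ => (b + v * z) + s * (p' + q' * z) := by funext t; ring
    rw [e]; simpa using h
  exact h1.prodMk (h2.prodMk (hasDerivAt_const s z))

lemma third_coord_Apt (a u b v p q p' q' s z : ℝ) :
    (Apt a u b v p q p' q' s z).2.2 = z := rfl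

section main

variable {f : ℝ × ℝ × ℝ → ℝ} (hf : ContDiff ℝ (⊤ : ℕ∞) f) (hsupp : HasCompactSupport f)

include hsupp in
/-- Outside a suitable strip in the `z` variable, `f` and its derivatives vanish. -/
lemma exists_radius :
    ∃ R : ℝ, ∀ x : ℝ × ℝ × ℝ, R < |x.2.2| →
      f x = 0 ∧ fderiv ℝ f x = 0 ∧ fderiv ℝ (fderiv ℝ f) x = 0 := by
  obtain ⟨R, hR⟩ := (IsCompact.isBounded hsupp).subset_closedBall 0
  refine ⟨R, fun x hx => ?_⟩
  have hxn : ∀ y : ℝ × ℝ × ℝ, y ∈ tsupport f → ¬ (R < |y.2.2|) := by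
    intro y hy
    have h1 : ‖y‖ ≤ R := by simpa [Metric.mem_closedBall] using hR hy
    have h2 : |y.2.2| ≤ ‖y‖ := by
      calc |y.2.2| = ‖y.2.2‖ := (Real.norm_eq_abs _).symm
        _ ≤ ‖y.2‖ := norm_snd_le y.2
        _ ≤ ‖y‖ := norm_snd_le y
    push_neg
    linarith
  have hsub2 : Function.support (fderiv ℝ f) ⊆ tsupport f := support_fderiv_subset ℝ
  have hsub3 : Function.support (fderiv ℝ (fderiv ℝ f)) ⊆ tsupport f :=
    (support_fderiv_subset ℝ).trans
      (closure_minimal hsub2 (isClosed_tsupport f))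
  refine ⟨?_, ?_, ?_⟩
  · by_contra h
    exact hxn x (subset_tsupport f (Function.mem_support.mpr h)) hx
  · by_contra h
    exact hxn x (hsub2 (Function.mem_support.mpr h)) hx
  · by_contra h
    exact hxn x (hsub3 (Function.mem_support.mpr h)) hx

lemma not_mem_Icc_abs {R z : ℝ} (hz : z ∉ Set.Icc (-R) R) : R < |z| := by
  simp only [Set.mem_Icc, not_and_or, not_le] at hz
  rcases hz with h | h
  · exact lt_abs.mpr (Or.inr (by linarith))
  · exact lt_abs.mpr (Or.inl h)

include hf hsupp in
/-- First differentiation under the integral sign. -/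
lemma line_deriv₁ (a u b v p q p' q' s₀ : ℝ) :
    HasDerivAt (fun s => ∫ z : ℝ, f (Apt a u b v p q p' q' s z))
      (∫ z : ℝ, fderiv ℝ f (Apt a u b v p q p' q' s₀ z) (wv p q p' q' z)) s₀ := by
  obtain ⟨R, hR⟩ := exists_radius hsupp
  obtain ⟨M, hM⟩ := ((hf.fderiv_right (m := (⊤ : ℕ∞)) (by simp)).continuous).bounded_above_of_compact_support
    (hsupp.fderiv (𝕜 := ℝ))
  have contDf : Continuous (fderiv ℝ f) := (hf.fderiv_right (m := (⊤ : ℕ∞)) (by simp)).continuous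
  refine (hasDerivAt_integral_of_dominated_loc_of_deriv_le (Metric.ball_mem_nhds s₀ one_pos)
    (F := fun s z => f (Apt a u b v p q p' q' s z))
    (F' := fun s z => fderiv ℝ f (Apt a u b v p q p' q' s z) (wv p q p' q' z))
    (bound := Set.indicator (Set.Icc (-R) R) (fun z => M * ‖wv p q p' q' z‖))
    ?_ ?_ ?_ ?_ ?_ ?_).2
  · exact Filter.Eventually.of_forall fun s =>
      (hf.continuous.comp (continuous_Apt a u b v p q p' q' s)).aestronglyMeasurable
  · refine (hf.continuous.comp (continuous_Apt a u b v p q p' q' s₀)).integrable_of_hasCompactSupport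
      (HasCompactSupport.intro (isCompact_Icc (a := -R) (b := R)) fun z hz => ?_)
    have h0 := (hR (Apt a u b v p q p' q' s₀ z) (by simpa [third_coord_Apt] using not_mem_Icc_abs hz)).1
    simpa using h0
  · exact ((contDf.comp (continuous_Apt a u b v p q p' q' s₀)).clm_apply
      (continuous_wv p q p' q')).aestronglyMeasurable
  · refine Filter.Eventually.of_forall fun z s _ => ?_
    by_cases hz : z ∈ Set.Icc (-R) R
    · rw [Set.indicator_of_mem hz]
      calc ‖fderiv ℝ f (Apt a u b v p q p' q' s z) (wv p q p' q' z)‖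
          ≤ ‖fderiv ℝ f (Apt a u b v p q p' q' s z)‖ * ‖wv p q p' q' z‖ :=
            ContinuousLinearMap.le_opNorm _ _
        _ ≤ M * ‖wv p q p' q' z‖ :=
            mul_le_mul_of_nonneg_right (hM _) (norm_nonneg _)
    · rw [Set.indicator_of_notMem hz]
      have h0 := (hR (Apt a u b v p q p' q' s z)
        (by simpa [third_coord_Apt] using not_mem_Icc_abs hz)).2.1
      simp [h0]
  · rw [integrable_indicator_iff measurableSet_Icc]
    exact (continuous_const.mul (continuous_wv p q p' q').norm).integrableOn_Icc
  · refine Filter.Eventually.of_forall fun z s _ => ?_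
    exact (hf.differentiable (by simp) _).hasFDerivAt.comp_hasDerivAt s
      (hasDerivAt_Apt a u b v p q p' q' s z)

include hf hsupp in
/-- Second differentiation under the integral sign. -/
lemma line_deriv₂ (a u b v p q p' q' s₀ : ℝ) :
    HasDerivAt (fun s => ∫ z : ℝ, fderiv ℝ f (Apt a u b v p q p' q' s z) (wv p q p' q' z))
      (∫ z : ℝ, fderiv ℝ (fderiv ℝ f) (Apt a u b v p q p' q' s₀ z)
        (wv p q p' q' z) (wv p q p' q' z)) s₀ := by
  obtain ⟨R, hR⟩ := exists_radius hsupp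
  have hDf : ContDiff ℝ (⊤ : ℕ∞) (fderiv ℝ f) := hf.fderiv_right (m := (⊤ : ℕ∞)) (by simp)
  obtain ⟨M, hM⟩ := ((hDf.fderiv_right (m := (⊤ : ℕ∞)) (by simp)).continuous).bounded_above_of_compact_support
    ((hsupp.fderiv (𝕜 := ℝ)).fderiv (𝕜 := ℝ))
  have contDf : Continuous (fderiv ℝ f) := hDf.continuous
  have contDDf : Continuous (fderiv ℝ (fderiv ℝ f)) := (hDf.fderiv_right (m := (⊤ : ℕ∞)) (by simp)).continuous
  refine (hasDerivAt_integral_of_dominated_loc_of_deriv_le (Metric.ball_mem_nhds s₀ one_pos)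
    (F := fun s z => fderiv ℝ f (Apt a u b v p q p' q' s z) (wv p q p' q' z))
    (F' := fun s z => fderiv ℝ (fderiv ℝ f) (Apt a u b v p q p' q' s z)
      (wv p q p' q' z) (wv p q p' q' z))
    (bound := Set.indicator (Set.Icc (-R) R)
      (fun z => M * ‖wv p q p' q' z‖ * ‖wv p q p' q' z‖))
    ?_ ?_ ?_ ?_ ?_ ?_).2
  · exact Filter.Eventually.of_forall fun s =>
      ((contDf.comp (continuous_Apt a u b v p q p' q' s)).clm_apply
        (continuous_wv p q p' q')).aestronglyMeasurable
  · refine ((contDf.comp (continuous_Apt a u b v p q p' q' s₀)).clm_apply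
      (continuous_wv p q p' q')).integrable_of_hasCompactSupport
      (HasCompactSupport.intro (isCompact_Icc (a := -R) (b := R)) fun z hz => ?_)
    have h0 := (hR (Apt a u b v p q p' q' s₀ z)
      (by simpa [third_coord_Apt] using not_mem_Icc_abs hz)).2.1
    simp [h0]
  · exact (((contDDf.comp (continuous_Apt a u b v p q p' q' s₀)).clm_apply
      (continuous_wv p q p' q')).clm_apply (continuous_wv p q p' q')).aestronglyMeasurable
  · refine Filter.Eventually.of_forall fun z s _ => ?_
    by_cases hz : z ∈ Set.Icc (-R) R
    · rw [Set.indicator_of_mem hz]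
      calc ‖fderiv ℝ (fderiv ℝ f) (Apt a u b v p q p' q' s z) (wv p q p' q' z) (wv p q p' q' z)‖
          ≤ ‖fderiv ℝ (fderiv ℝ f) (Apt a u b v p q p' q' s z) (wv p q p' q' z)‖
              * ‖wv p q p' q' z‖ := ContinuousLinearMap.le_opNorm _ _
        _ ≤ (‖fderiv ℝ (fderiv ℝ f) (Apt a u b v p q p' q' s z)‖ * ‖wv p q p' q' z‖)
              * ‖wv p q p' q' z‖ :=
            mul_le_mul_of_nonneg_right (ContinuousLinearMap.le_opNorm _ _) (norm_nonneg _)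
        _ ≤ M * ‖wv p q p' q' z‖ * ‖wv p q p' q' z‖ := by
            gcongr
            exact hM _
    · rw [Set.indicator_of_notMem hz]
      have h0 := (hR (Apt a u b v p q p' q' s z)
        (by simpa [third_coord_Apt] using not_mem_Icc_abs hz)).2.2
      simp [h0]
  · rw [integrable_indicator_iff measurableSet_Icc]
    exact ((continuous_const.mul (continuous_wv p q p' q').norm).mul
      (continuous_wv p q p' q').norm).integrableOn_Icc
  · refine Filter.Eventually.of_forall fun z s _ => ?_
    have h1 : HasDerivAt (fun s => fderiv ℝ f (Apt a u b v p q p' q' s z))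
        (fderiv ℝ (fderiv ℝ f) (Apt a u b v p q p' q' s z) (wv p q p' q' z)) s :=
      (hDf.differentiable (by simp) _).hasFDerivAt.comp_hasDerivAt s
        (hasDerivAt_Apt a u b v p q p' q' s z)
    have h2 := h1.clm_apply (hasDerivAt_const s (wv p q p' q' z))
    simpa using h2

include hf hsupp in
/-- The second derivative along the line, as an integral. -/
lemma second_deriv_line (a u b v p q p' q' s₀ : ℝ) :
    deriv (fun t => deriv (fun s => ∫ z : ℝ, f (Apt a u b v p q p' q' s z)) t) s₀
      = ∫ z : ℝ, fderiv ℝ (fderiv ℝ f) (Apt a u b v p q p' q' s₀ z)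
          (wv p q p' q' z) (wv p q p' q' z) := by
  have h : (fun t => deriv (fun s => ∫ z : ℝ, f (Apt a u b v p q p' q' s z)) t)
      = fun t => ∫ z : ℝ, fderiv ℝ f (Apt a u b v p q p' q' t z) (wv p q p' q' z) :=
    funext fun t => (line_deriv₁ hf hsupp a u b v p q p' q' t).deriv
  rw [h]
  exact (line_deriv₂ hf hsupp a u b v p q p' q' s₀).deriv

include hf hsupp in
lemma integrable_second (P : ℝ → ℝ × ℝ × ℝ) (hP : Continuous P)
    (hPz : ∀ z, (P z).2.2 = z) (w : ℝ → ℝ × ℝ × ℝ) (hw : Continuous w) :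
    Integrable (fun z => fderiv ℝ (fderiv ℝ f) (P z) (w z) (w z)) := by
  obtain ⟨R, hR⟩ := exists_radius hsupp
  have hDf : ContDiff ℝ (⊤ : ℕ∞) (fderiv ℝ f) := hf.fderiv_right (m := (⊤ : ℕ∞)) (by simp)
  have contDDf : Continuous (fderiv ℝ (fderiv ℝ f)) := (hDf.fderiv_right (m := (⊤ : ℕ∞)) (by simp)).continuous
  refine (((contDDf.comp hP).clm_apply hw).clm_apply hw).integrable_of_hasCompactSupport
    (HasCompactSupport.intro (isCompact_Icc (a := -R) (b := R)) fun z hz => ?_)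
  have h0 := (hR (P z) (by rw [hPz]; exact not_mem_Icc_abs hz)).2.2
  simp [h0]

end main

/-- The algebraic cancellation at the level of the second derivative bilinear form. -/
lemma bilinear_cancel (B : (ℝ × ℝ × ℝ) →L[ℝ] (ℝ × ℝ × ℝ) →L[ℝ] ℝ) (z : ℝ) :
    B (z, 1, 0) (z, 1, 0) - B (z, -1, 0) (z, -1, 0)
      - B (1, z, 0) (1, z, 0) + B (-1, z, 0) (-1, z, 0) = 0 := by
  have h1 : ((z, 1, 0) : ℝ × ℝ × ℝ) = z • (1, 0, 0) + (0, 1, 0) := by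
    simp [Prod.ext_iff]
  have h2 : ((z, -1, 0) : ℝ × ℝ × ℝ) = z • (1, 0, 0) - (0, 1, 0) := by
    simp [Prod.ext_iff]
  have h3 : ((1, z, 0) : ℝ × ℝ × ℝ) = (1, 0, 0) + z • (0, 1, 0) := by
    simp [Prod.ext_iff]
  have h4 : ((-1, z, 0) : ℝ × ℝ × ℝ) = -(1, 0, 0) + z • (0, 1, 0) := by
    simp [Prod.ext_iff]
  rw [h1, h2, h3, h4]
  simp only [map_add, map_sub, _root_.map_smul, map_neg, ContinuousLinearMap.add_apply,
    ContinuousLinearMap.sub_apply, ContinuousLinearMap.smul_apply,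
    ContinuousLinearMap.neg_apply, smul_eq_mul]
  ring

end JohnAux

/-- The reparametrized John transform
`r̃ (ξ₁,ξ₂,ξ₃,ξ₄) = r (ξ₃−ξ₄, ξ₁−ξ₂, ξ₁+ξ₂, ξ₃+ξ₄)` of a smooth compactly
supported `f : ℝ³ → ℝ` satisfies the ultrahyperbolic equation
`(∂²_{ξ₁ξ₁} − ∂²_{ξ₂ξ₂} − ∂²_{ξ₃ξ₃} + ∂²_{ξ₄ξ₄}) r̃ = 0` on `ℝ⁴`. -/
theorem john_transform_reparametrized_ultrahyperbolic
    (f : ℝ × ℝ × ℝ → ℝ) (hf : ContDiff ℝ (⊤ : ℕ∞) f) (hsupp : HasCompactSupport f)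
    (r : ℝ → ℝ → ℝ → ℝ → ℝ)
    (hr : ∀ x y u v : ℝ, r x y u v = ∫ z : ℝ, f (x + u * z, y + v * z, z))
    (rt : ℝ → ℝ → ℝ → ℝ → ℝ)
    (hrt : ∀ ξ₁ ξ₂ ξ₃ ξ₄ : ℝ,
      rt ξ₁ ξ₂ ξ₃ ξ₄ = r (ξ₃ - ξ₄) (ξ₁ - ξ₂) (ξ₁ + ξ₂) (ξ₃ + ξ₄)) :
    ∀ ξ₁ ξ₂ ξ₃ ξ₄ : ℝ,
      deriv (fun t => deriv (fun s => rt s ξ₂ ξ₃ ξ₄) t) ξ₁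
        - deriv (fun t => deriv (fun s => rt ξ₁ s ξ₃ ξ₄) t) ξ₂
        - deriv (fun t => deriv (fun s => rt ξ₁ ξ₂ s ξ₄) t) ξ₃
        + deriv (fun t => deriv (fun s => rt ξ₁ ξ₂ ξ₃ s) t) ξ₄ = 0 := by
  intro ξ₁ ξ₂ ξ₃ ξ₄
  set D2f := fderiv ℝ (fderiv ℝ f) with hD2f
  set P : ℝ → ℝ × ℝ × ℝ :=
    fun z => (ξ₃ - ξ₄ + (ξ₁ + ξ₂) * z, ξ₁ - ξ₂ + (ξ₃ + ξ₄) * z, z) with hP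
  have hPcont : Continuous P := by rw [hP]; fun_prop
  have hPz : ∀ z, (P z).2.2 = z := fun z => rfl
  -- the four second derivatives
  have h1 : deriv (fun t => deriv (fun s => rt s ξ₂ ξ₃ ξ₄) t) ξ₁
      = ∫ z : ℝ, D2f (P z) (z, 1, 0) (z, 1, 0) := by
    have e : (fun s => rt s ξ₂ ξ₃ ξ₄)
        = fun s => ∫ z : ℝ, f (Apt (ξ₃ - ξ₄) ξ₂ (-ξ₂) (ξ₃ + ξ₄) 0 1 1 0 s z) := by
      funext s
      rw [hrt, hr]
      congr 1
      funext z
      congr 1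
      simp only [Apt, Prod.mk.injEq]
      exact ⟨by ring, by ring, by trivial⟩
    rw [e, second_deriv_line hf hsupp]
    congr 1
    funext z
    have hA : Apt (ξ₃ - ξ₄) ξ₂ (-ξ₂) (ξ₃ + ξ₄) 0 1 1 0 ξ₁ z = P z := by
      simp only [Apt, hP, Prod.mk.injEq]
      exact ⟨by ring, by ring, by trivial⟩
    have hw : wv 0 1 1 0 z = ((z, 1, 0) : ℝ × ℝ × ℝ) := by
      simp only [wv, Prod.mk.injEq]
      exact ⟨by ring, by ring, by trivial⟩
    rw [hA, hw, hD2f]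
  have h2 : deriv (fun t => deriv (fun s => rt ξ₁ s ξ₃ ξ₄) t) ξ₂
      = ∫ z : ℝ, D2f (P z) (z, -1, 0) (z, -1, 0) := by
    have e : (fun s => rt ξ₁ s ξ₃ ξ₄)
        = fun s => ∫ z : ℝ, f (Apt (ξ₃ - ξ₄) ξ₁ ξ₁ (ξ₃ + ξ₄) 0 1 (-1) 0 s z) := by
      funext s
      rw [hrt, hr]
      congr 1
      funext z
      congr 1
      simp only [Apt, Prod.mk.injEq]
      exact ⟨by ring, by ring, by trivial⟩
    rw [e, second_deriv_line hf hsupp]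
    congr 1
    funext z
    have hA : Apt (ξ₃ - ξ₄) ξ₁ ξ₁ (ξ₃ + ξ₄) 0 1 (-1) 0 ξ₂ z = P z := by
      simp only [Apt, hP, Prod.mk.injEq]
      exact ⟨by ring, by ring, by trivial⟩
    have hw : wv 0 1 (-1) 0 z = ((z, -1, 0) : ℝ × ℝ × ℝ) := by
      simp only [wv, Prod.mk.injEq]
      exact ⟨by ring, by ring, by trivial⟩
    rw [hA, hw, hD2f]
  have h3 : deriv (fun t => deriv (fun s => rt ξ₁ ξ₂ s ξ₄) t) ξ₃
      = ∫ z : ℝ, D2f (P z) (1, z, 0) (1, z, 0) := by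
    have e : (fun s => rt ξ₁ ξ₂ s ξ₄)
        = fun s => ∫ z : ℝ, f (Apt (-ξ₄) (ξ₁ + ξ₂) (ξ₁ - ξ₂) ξ₄ 1 0 0 1 s z) := by
      funext s
      rw [hrt, hr]
      congr 1
      funext z
      congr 1
      simp only [Apt, Prod.mk.injEq]
      exact ⟨by ring, by ring, by trivial⟩
    rw [e, second_deriv_line hf hsupp]
    congr 1
    funext z
    have hA : Apt (-ξ₄) (ξ₁ + ξ₂) (ξ₁ - ξ₂) ξ₄ 1 0 0 1 ξ₃ z = P z := by
      simp only [Apt, hP, Prod.mk.injEq]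
      exact ⟨by ring, by ring, by trivial⟩
    have hw : wv 1 0 0 1 z = ((1, z, 0) : ℝ × ℝ × ℝ) := by
      simp only [wv, Prod.mk.injEq]
      exact ⟨by ring, by ring, by trivial⟩
    rw [hA, hw, hD2f]
  have h4 : deriv (fun t => deriv (fun s => rt ξ₁ ξ₂ ξ₃ s) t) ξ₄
      = ∫ z : ℝ, D2f (P z) (-1, z, 0) (-1, z, 0) := by
    have e : (fun s => rt ξ₁ ξ₂ ξ₃ s)
        = fun s => ∫ z : ℝ, f (Apt ξ₃ (ξ₁ + ξ₂) (ξ₁ - ξ₂) ξ₃ (-1) 0 0 1 s z) := by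
      funext s
      rw [hrt, hr]
      congr 1
      funext z
      congr 1
      simp only [Apt, Prod.mk.injEq]
      exact ⟨by ring, by ring, by trivial⟩
    rw [e, second_deriv_line hf hsupp]
    congr 1
    funext z
    have hA : Apt ξ₃ (ξ₁ + ξ₂) (ξ₁ - ξ₂) ξ₃ (-1) 0 0 1 ξ₄ z = P z := by
      simp only [Apt, hP, Prod.mk.injEq]
      exact ⟨by ring, by ring, by trivial⟩
    have hw : wv (-1) 0 0 1 z = ((-1, z, 0) : ℝ × ℝ × ℝ) := by
      simp only [wv, Prod.mk.injEq]
      exact ⟨by ring, by ring, by trivial⟩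
    rw [hA, hw, hD2f]
  rw [h1, h2, h3, h4]
  -- integrability of the four integrands
  have hi1 : Integrable (fun z => D2f (P z) (z, 1, 0) (z, 1, 0)) :=
    integrable_second hf hsupp P hPcont hPz _ (by fun_prop)
  have hi2 : Integrable (fun z => D2f (P z) (z, -1, 0) (z, -1, 0)) :=
    integrable_second hf hsupp P hPcont hPz _ (by fun_prop)
  have hi3 : Integrable (fun z => D2f (P z) (1, z, 0) (1, z, 0)) :=
    integrable_second hf hsupp P hPcont hPz _ (by fun_prop)
  have hi4 : Integrable (fun z => D2f (P z) (-1, z, 0) (-1, z, 0)) :=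
    integrable_second hf hsupp P hPcont hPz _ (by fun_prop)
  have hi12 : Integrable (fun z => D2f (P z) (z, 1, 0) (z, 1, 0)
      - D2f (P z) (z, -1, 0) (z, -1, 0)) := hi1.sub hi2
  have hi123 : Integrable (fun z => D2f (P z) (z, 1, 0) (z, 1, 0)
      - D2f (P z) (z, -1, 0) (z, -1, 0) - D2f (P z) (1, z, 0) (1, z, 0)) := hi12.sub hi3
  rw [← integral_sub hi1 hi2, ← integral_sub hi12 hi3, ← integral_add hi123 hi4]
  have hz : (fun z => D2f (P z) (z, 1, 0) (z, 1, 0) - D2f (P z) (z, -1, 0) (z, -1, 0)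
      - D2f (P z) (1, z, 0) (1, z, 0) + D2f (P z) (-1, z, 0) (-1, z, 0))
      = fun _ => (0 : ℝ) :=
    funext fun z => bilinear_cancel (D2f (P z)) z
  rw [hz, integral_zero]
end

section
/- Let f : ℝ³ → ℝ be a smooth (C^∞) function with compact support, let r(x,y,u,v) = ∫_ℝ f(x + u·z, y + v·z, z) dz be its John transform, and let r̃(ξ₁, ξ₂, ξ₃, ξ₄) = r(ξ₃ − ξ₄, ξ₁ − ξ₂, ξ₁ + ξ₂, ξ₃ + ξ₄). Then for every (ξ₁, ξ₂, ξ₃, ξ₄) ∈ ℝ⁴ and every R ≥ 0, ∫₀^{2π} r̃(ξ₁ + R cos θ, ξ₂, ξ₃, ξ₄ + R sin θ) dθ = ∫₀^{2π} r̃(ξ₁, ξ₂ + R cos θ, ξ₃ + R sin θ, ξ₄) dθ. -/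
open Real MeasureTheory intervalIntegral

private lemma shift_integral {w : ℝ → ℝ} (hw : Function.Periodic w (2 * π)) (ψ : ℝ) :
    (∫ θ in (0:ℝ)..(2 * π), w (θ + ψ)) = ∫ θ in (0:ℝ)..(2 * π), w θ := by
  rw [intervalIntegral.integral_comp_add_right, zero_add]
  have h := hw.intervalIntegral_add_eq ψ 0
  simpa [add_comm] using h

private lemma circle_swap (f : ℝ × ℝ × ℝ → ℝ) (P Q R z : ℝ) :
    (∫ θ in (0:ℝ)..(2 * π), f (P + R * (z * cos θ - sin θ), Q + R * (cos θ + z * sin θ), z))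
      = ∫ θ in (0:ℝ)..(2 * π),
          f (P + R * (z * cos θ + sin θ), Q + R * (z * sin θ - cos θ), z) := by
  set s : ℝ := Real.sqrt (z ^ 2 + 1) with hs
  have hs0 : 0 < s := Real.sqrt_pos.2 (by positivity)
  have hsq : s ^ 2 = z ^ 2 + 1 := Real.sq_sqrt (by positivity)
  set ψ : ℝ := Real.arccos (z / s) with hψ
  have hz1 : |z / s| ≤ 1 := by
    rw [abs_div, abs_of_pos hs0, div_le_one hs0]
    nlinarith [abs_nonneg z, sq_abs z]
  have hzb := abs_le.1 hz1
  have hcos : s * Real.cos ψ = z := by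
    rw [hψ, Real.cos_arccos hzb.1 hzb.2]
    field_simp
  have hsin : s * Real.sin ψ = 1 := by
    rw [hψ, Real.sin_arccos]
    have h1 : 1 - (z / s) ^ 2 = (1 / s) ^ 2 := by
      field_simp
      nlinarith
    rw [h1, Real.sqrt_sq (by positivity)]
    field_simp
  have e1 : ∀ θ : ℝ, z * cos θ - sin θ = s * Real.cos (θ + ψ) := by
    intro θ; rw [Real.cos_add]
    linear_combination (-Real.cos θ) * hcos + Real.sin θ * hsin
  have e2 : ∀ θ : ℝ, cos θ + z * sin θ = s * Real.sin (θ + ψ) := by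
    intro θ; rw [Real.sin_add]
    linear_combination (-Real.sin θ) * hcos - Real.cos θ * hsin
  have e3 : ∀ θ : ℝ, z * cos θ + sin θ = s * Real.cos (θ + -ψ) := by
    intro θ; rw [Real.cos_add, Real.cos_neg, Real.sin_neg]
    linear_combination (-Real.cos θ) * hcos - Real.sin θ * hsin
  have e4 : ∀ θ : ℝ, z * sin θ - cos θ = s * Real.sin (θ + -ψ) := by
    intro θ; rw [Real.sin_add, Real.cos_neg, Real.sin_neg]
    linear_combination (-Real.sin θ) * hcos + Real.cos θ * hsin
  simp only [e1, e2, e3, e4]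
  have hper : Function.Periodic (fun u : ℝ => f (P + R * (s * Real.cos u), Q + R * (s * Real.sin u), z)) (2 * π) := by
    intro u
    simp [Real.cos_add_two_pi, Real.sin_add_two_pi]
  rw [shift_integral hper ψ, shift_integral hper (-ψ)]

private lemma integrable_aux (f : ℝ × ℝ × ℝ → ℝ) (hc : Continuous f)
    (hsupp : HasCompactSupport f) (u v : ℝ → ℝ → ℝ)
    (hu : Continuous fun p : ℝ × ℝ => u p.1 p.2)
    (hv : Continuous fun p : ℝ × ℝ => v p.1 p.2) :
    Integrable (fun p : ℝ × ℝ => f (u p.1 p.2, v p.1 p.2, p.2))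
      ((volume.restrict (Set.Ioc 0 (2 * π))).prod volume) := by
  obtain ⟨M, hM⟩ := hsupp.exists_bound_of_continuous hc
  have hM0 : 0 ≤ M := le_trans (norm_nonneg _) (hM 0)
  set S : Set ℝ := (fun q : ℝ × ℝ × ℝ => q.2.2) '' tsupport f with hS
  have hScomp : IsCompact S := hsupp.image (by fun_prop)
  have hSmeas : MeasurableSet S := hScomp.measurableSet
  apply Integrable.mono' (g := fun p : ℝ × ℝ => M * S.indicator (fun _ => (1 : ℝ)) p.2)
  · have hg1 : Integrable (fun _ : ℝ => M) (volume.restrict (Set.Ioc 0 (2 * π))) :=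
      integrableOn_const measure_Ioc_lt_top.ne
    have hg2 : Integrable (S.indicator fun _ => (1 : ℝ)) volume := by
      rw [integrable_indicator_iff hSmeas]
      exact integrableOn_const hScomp.measure_lt_top.ne
    exact hg1.mul_prod hg2
  · exact (hc.comp (by fun_prop)).aestronglyMeasurable
  · filter_upwards with p
    by_cases hz : p.2 ∈ S
    · rw [Set.indicator_of_mem hz, mul_one]
      exact hM _
    · have hzero : f (u p.1 p.2, v p.1 p.2, p.2) = 0 := by
        by_contra h
        exact hz ⟨_, subset_tsupport f h, rfl⟩
      rw [Set.indicator_of_notMem hz, hzero]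
      simp

private lemma key_swap (f : ℝ × ℝ × ℝ → ℝ) (hc : Continuous f)
    (hsupp : HasCompactSupport f) (A B C D R : ℝ) :
    (∫ θ in (0:ℝ)..(2 * π), ∫ z : ℝ,
        f (A + B * z + R * (z * cos θ - sin θ), C + D * z + R * (cos θ + z * sin θ), z))
      = ∫ θ in (0:ℝ)..(2 * π), ∫ z : ℝ,
          f (A + B * z + R * (z * cos θ + sin θ), C + D * z + R * (z * sin θ - cos θ), z) := by
  have h2π : (0:ℝ) ≤ 2 * π := by positivity
  have h1 : Integrable (fun p : ℝ × ℝ =>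
      f (A + B * p.2 + R * (p.2 * cos p.1 - sin p.1),
        C + D * p.2 + R * (cos p.1 + p.2 * sin p.1), p.2))
      ((volume.restrict (Set.Ioc 0 (2 * π))).prod volume) :=
    integrable_aux f hc hsupp (fun θ z => A + B * z + R * (z * cos θ - sin θ))
      (fun θ z => C + D * z + R * (cos θ + z * sin θ)) (by fun_prop) (by fun_prop)
  have h2 : Integrable (fun p : ℝ × ℝ =>
      f (A + B * p.2 + R * (p.2 * cos p.1 + sin p.1),
        C + D * p.2 + R * (p.2 * sin p.1 - cos p.1), p.2))
      ((volume.restrict (Set.Ioc 0 (2 * π))).prod volume) :=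
    integrable_aux f hc hsupp (fun θ z => A + B * z + R * (z * cos θ + sin θ))
      (fun θ z => C + D * z + R * (z * sin θ - cos θ)) (by fun_prop) (by fun_prop)
  rw [intervalIntegral.integral_of_le h2π, intervalIntegral.integral_of_le h2π]
  calc (∫ θ in Set.Ioc (0:ℝ) (2 * π), ∫ z : ℝ,
        f (A + B * z + R * (z * cos θ - sin θ), C + D * z + R * (cos θ + z * sin θ), z))
      = ∫ z : ℝ, ∫ θ in Set.Ioc (0:ℝ) (2 * π),
          f (A + B * z + R * (z * cos θ - sin θ), C + D * z + R * (cos θ + z * sin θ), z) :=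
        MeasureTheory.integral_integral_swap h1
    _ = ∫ z : ℝ, ∫ θ in Set.Ioc (0:ℝ) (2 * π),
          f (A + B * z + R * (z * cos θ + sin θ), C + D * z + R * (z * sin θ - cos θ), z) := by
        congr 1
        funext z
        rw [← intervalIntegral.integral_of_le h2π, ← intervalIntegral.integral_of_le h2π]
        exact circle_swap f (A + B * z) (C + D * z) R z
    _ = ∫ θ in Set.Ioc (0:ℝ) (2 * π), ∫ z : ℝ,
          f (A + B * z + R * (z * cos θ + sin θ), C + D * z + R * (z * sin θ - cos θ), z) :=
        (MeasureTheory.integral_integral_swap h2).symm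

/-- For the reparametrized John transform `r̃` of a smooth compactly
supported `f : ℝ³ → ℝ`, the single-circle Asgeirsson identity holds: for every point
and every radius `R ≥ 0`, the integral of `r̃` over the circle of radius `R` in the
`(ξ₁,ξ₄)`-plane equals the integral over the circle of the same radius in the
`(ξ₂,ξ₃)`-plane. -/
theorem john_transform_asgeirsson_first
    (f : ℝ × ℝ × ℝ → ℝ) (hf : ContDiff ℝ (⊤ : ℕ∞) f) (hsupp : HasCompactSupport f)
    (r : ℝ → ℝ → ℝ → ℝ → ℝ)
    (hr : ∀ x y u v : ℝ, r x y u v = ∫ z : ℝ, f (x + u * z, y + v * z, z))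
    (rt : ℝ → ℝ → ℝ → ℝ → ℝ)
    (hrt : ∀ ξ₁ ξ₂ ξ₃ ξ₄ : ℝ,
      rt ξ₁ ξ₂ ξ₃ ξ₄ = r (ξ₃ - ξ₄) (ξ₁ - ξ₂) (ξ₁ + ξ₂) (ξ₃ + ξ₄)) :
    ∀ (ξ₁ ξ₂ ξ₃ ξ₄ R : ℝ), 0 ≤ R →
      (∫ θ in (0:ℝ)..(2 * π), rt (ξ₁ + R * cos θ) ξ₂ ξ₃ (ξ₄ + R * sin θ))
        = ∫ θ in (0:ℝ)..(2 * π), rt ξ₁ (ξ₂ + R * cos θ) (ξ₃ + R * sin θ) ξ₄ := by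
  intro ξ₁ ξ₂ ξ₃ ξ₄ R hR
  have hL : ∀ θ : ℝ, rt (ξ₁ + R * cos θ) ξ₂ ξ₃ (ξ₄ + R * sin θ)
      = ∫ z : ℝ, f ((ξ₃ - ξ₄) + (ξ₁ + ξ₂) * z + R * (z * cos θ - sin θ),
          (ξ₁ - ξ₂) + (ξ₃ + ξ₄) * z + R * (cos θ + z * sin θ), z) := by
    intro θ
    rw [hrt, hr]
    exact congrArg _ (funext fun z => congrArg f
      (by simp only [Prod.mk.injEq]; exact ⟨by ring, by ring, trivial⟩))
  have hRr : ∀ θ : ℝ, rt ξ₁ (ξ₂ + R * cos θ) (ξ₃ + R * sin θ) ξ₄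
      = ∫ z : ℝ, f ((ξ₃ - ξ₄) + (ξ₁ + ξ₂) * z + R * (z * cos θ + sin θ),
          (ξ₁ - ξ₂) + (ξ₃ + ξ₄) * z + R * (z * sin θ - cos θ), z) := by
    intro θ
    rw [hrt, hr]
    exact congrArg _ (funext fun z => congrArg f
      (by simp only [Prod.mk.injEq]; exact ⟨by ring, by ring, trivial⟩))
  simp only [hL, hRr]
  exact key_swap f hf.continuous hsupp (ξ₃ - ξ₄) (ξ₁ + ξ₂) (ξ₁ - ξ₂) (ξ₃ + ξ₄) R
end

section
/- Let f : ℝ³ → ℝ be a smooth (C^∞) function with compact support, let r(x,y,u,v) = ∫_ℝ f(x + u·z, y + v·z, z) dz be its John transform, and let r̃(ξ₁, ξ₂, ξ₃, ξ₄) = r(ξ₃ − ξ₄, ξ₁ − ξ₂, ξ₁ + ξ₂, ξ₃ + ξ₄). Define the microimage integral M(R₁, R₂) = ∫₀^{2π} ∫₀^{2π} r̃(R₁ cos θ₁, R₂ cos θ₂, R₂ sin θ₂, R₁ sin θ₁) dθ₁ dθ₂ for R₁, R₂ ≥ 0. Then M is symmetric: M(R₁, R₂) = M(R₂, R₁) for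 all R₁, R₂ ≥ 0. -/
open Real MeasureTheory intervalIntegral

namespace MicroimageAux

open Set Function

/-- The rotation angle used to relate the two microimages, depending on `z`. -/
noncomputable def bb (z : ℝ) : ℝ := π - 2 * Real.arctan z

lemma cos_bb (z : ℝ) : Real.cos (bb z) = (z ^ 2 - 1) / (1 + z ^ 2) := by
  have h0 : (0:ℝ) < 1 + z ^ 2 := by positivity
  unfold bb
  rw [Real.cos_pi_sub, Real.cos_two_mul, Real.cos_arctan]
  rw [div_pow, one_pow, Real.sq_sqrt h0.le]
  field_simp
  ring

lemma sin_bb (z : ℝ) : Real.sin (bb z) = 2 * z / (1 + z ^ 2) := by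
  have h0 : (0:ℝ) < 1 + z ^ 2 := by positivity
  unfold bb
  rw [Real.sin_pi_sub, Real.sin_two_mul, Real.sin_arctan, Real.cos_arctan]
  rw [mul_assoc, div_mul_div_comm, Real.mul_self_sqrt h0.le]
  ring

/-- The key pointwise identity. -/
lemma key (f : ℝ × ℝ × ℝ → ℝ) (A B θ₁ θ₂ z : ℝ) :
    f (A * Real.sin (θ₁ + bb z) - B * Real.sin (θ₂ - bb z)
        + (B * Real.cos (θ₂ - bb z) + A * Real.cos (θ₁ + bb z)) * z,
      B * Real.cos (θ₂ - bb z) - A * Real.cos (θ₁ + bb z)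
        + (A * Real.sin (θ₁ + bb z) + B * Real.sin (θ₂ - bb z)) * z, z)
    = f (B * Real.sin θ₂ - A * Real.sin θ₁ + (A * Real.cos θ₁ + B * Real.cos θ₂) * z,
        A * Real.cos θ₁ - B * Real.cos θ₂ + (B * Real.sin θ₂ + A * Real.sin θ₁) * z, z) := by
  have h0 : (1:ℝ) + z ^ 2 ≠ 0 := by positivity
  have h1 : A * Real.sin (θ₁ + bb z) - B * Real.sin (θ₂ - bb z)
        + (B * Real.cos (θ₂ - bb z) + A * Real.cos (θ₁ + bb z)) * z
      = B * Real.sin θ₂ - A * Real.sin θ₁ + (A * Real.cos θ₁ + B * Real.cos θ₂) * z := by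
    rw [Real.sin_add, Real.cos_add, Real.sin_sub, Real.cos_sub, cos_bb, sin_bb]
    field_simp
    ring
  have h2 : B * Real.cos (θ₂ - bb z) - A * Real.cos (θ₁ + bb z)
        + (A * Real.sin (θ₁ + bb z) + B * Real.sin (θ₂ - bb z)) * z
      = A * Real.cos θ₁ - B * Real.cos θ₂ + (B * Real.sin θ₂ + A * Real.sin θ₁) * z := by
    rw [Real.sin_add, Real.cos_add, Real.sin_sub, Real.cos_sub, cos_bb, sin_bb]
    field_simp
    ring
  rw [h1, h2]

/-- Integrability helper on `(volume.restrict (Ioc 0 (2π))).prod volume`. -/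
lemma aux_integrable {g : ℝ × ℝ → ℝ} {K : Set ℝ} (hK : IsCompact K) {C : ℝ}
    (sm : AEStronglyMeasurable g ((volume.restrict (Set.Ioc 0 (2 * π))).prod volume))
    (hb : ∀ p, ‖g p‖ ≤ C) (hv : ∀ p : ℝ × ℝ, p.2 ∉ K → g p = 0) :
    Integrable g ((volume.restrict (Set.Ioc 0 (2 * π))).prod volume) := by
  set μ := (volume.restrict (Set.Ioc 0 (2 * π))).prod (volume : Measure ℝ) with hμ
  have hKm : MeasurableSet (Set.univ ×ˢ K : Set (ℝ × ℝ)) :=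
    MeasurableSet.univ.prod hK.measurableSet
  have hfin : μ (Set.univ ×ˢ K) < ⊤ := by
    rw [hμ, Measure.prod_prod]
    exact ENNReal.mul_lt_top (by rw [Measure.restrict_apply_univ, Real.volume_Ioc]; exact ENNReal.ofReal_lt_top) hK.measure_lt_top
  have hint : Integrable ((Set.univ ×ˢ K : Set (ℝ × ℝ)).indicator fun _ => C) μ := by
    rw [integrable_indicator_iff hKm]
    exact integrableOn_const hfin.ne (by simp)
  refine hint.mono' sm ?_
  filter_upwards with p
  by_cases hp : p.2 ∈ K
  · have : p ∈ (Set.univ ×ˢ K : Set (ℝ × ℝ)) := ⟨trivial, hp⟩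
    rw [Set.indicator_of_mem this]
    exact hb p
  · have : p ∉ (Set.univ ×ˢ K : Set (ℝ × ℝ)) := fun h => hp h.2
    rw [Set.indicator_of_notMem this, hv p hp]
    simp

/-- Shift invariance of integrals of `2π`-periodic functions. -/
lemma shift {g : ℝ → ℝ} (hg : Function.Periodic g (2 * π)) (c : ℝ) :
    (∫ θ in (0:ℝ)..(2 * π), g (θ + c)) = ∫ θ in (0:ℝ)..(2 * π), g θ := by
  rw [intervalIntegral.integral_comp_add_right]
  have := hg.intervalIntegral_add_eq c 0
  simpa [zero_add, add_comm] using this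

end MicroimageAux

/-- For the reparametrized John transform `r̃` of a smooth compactly
supported `f : ℝ³ → ℝ`, the microimage integral
`M (R₁, R₂) = ∫₀^{2π} ∫₀^{2π} r̃ (R₁ cos θ₁, R₂ cos θ₂, R₂ sin θ₂, R₁ sin θ₁) dθ₁ dθ₂`
is symmetric: `M (R₁, R₂) = M (R₂, R₁)` for all `R₁, R₂ ≥ 0`. -/
theorem microimage_integral_symmetric
    (f : ℝ × ℝ × ℝ → ℝ) (hf : ContDiff ℝ (⊤ : ℕ∞) f) (hsupp : HasCompactSupport f)
    (r : ℝ → ℝ → ℝ → ℝ → ℝ)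
    (hr : ∀ x y u v : ℝ, r x y u v = ∫ z : ℝ, f (x + u * z, y + v * z, z))
    (rt : ℝ → ℝ → ℝ → ℝ → ℝ)
    (hrt : ∀ ξ₁ ξ₂ ξ₃ ξ₄ : ℝ,
      rt ξ₁ ξ₂ ξ₃ ξ₄ = r (ξ₃ - ξ₄) (ξ₁ - ξ₂) (ξ₁ + ξ₂) (ξ₃ + ξ₄))
    (M : ℝ → ℝ → ℝ)
    (hM : ∀ R₁ R₂ : ℝ,
      M R₁ R₂ = ∫ θ₂ in (0:ℝ)..(2 * π), ∫ θ₁ in (0:ℝ)..(2 * π),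
        rt (R₁ * cos θ₁) (R₂ * cos θ₂) (R₂ * sin θ₂) (R₁ * sin θ₁)) :
    ∀ R₁ R₂ : ℝ, 0 ≤ R₁ → 0 ≤ R₂ → M R₁ R₂ = M R₂ R₁ := by
  intro R₁ R₂ _ _
  have hcont : Continuous f := hf.continuous
  obtain ⟨C, hC⟩ := hsupp.exists_bound_of_continuous hcont
  set K : Set ℝ := (fun q : ℝ × ℝ × ℝ => q.2.2) '' tsupport f with hKdef
  have hK : IsCompact K := hsupp.image (continuous_snd.comp continuous_snd)
  have hvan : ∀ x y z : ℝ, z ∉ K → f (x, y, z) = 0 := by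
    intro x y z hz
    by_contra h
    exact hz ⟨(x, y, z), subset_tsupport f h, rfl⟩
  have h2π : (0:ℝ) ≤ 2 * π := by positivity
  have hμfin : IsFiniteMeasure (volume.restrict (Set.Ioc (0:ℝ) (2 * π))) := by
    refine ⟨?_⟩
    rw [Measure.restrict_apply_univ, Real.volume_Ioc]
    exact ENNReal.ofReal_lt_top
  set F : ℝ → ℝ → ℝ → ℝ → ℝ → ℝ := fun A B θ₁ θ₂ z =>
    f (B * sin θ₂ - A * sin θ₁ + (A * cos θ₁ + B * cos θ₂) * z,
       A * cos θ₁ - B * cos θ₂ + (B * sin θ₂ + A * sin θ₁) * z, z) with hF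
  have hFc : ∀ A B : ℝ, Continuous fun q : (ℝ × ℝ) × ℝ => F A B q.2 q.1.1 q.1.2 := by
    intro A B
    simp only [hF]
    exact hcont.comp (by fun_prop)
  have hFc2 : ∀ A B z : ℝ, Continuous fun q : ℝ × ℝ => F A B q.1 q.2 z := by
    intro A B z
    simp only [hF]
    exact hcont.comp (by fun_prop)
  have hMF : ∀ A B : ℝ, M A B = ∫ θ₂ in (0:ℝ)..(2 * π), ∫ θ₁ in (0:ℝ)..(2 * π),
      ∫ z : ℝ, F A B θ₁ θ₂ z := by
    intro A B
    simp only [hM, hrt, hr, hF]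
  -- Fubini: pull the `z`-integral outside
  have hswap : ∀ A B : ℝ, M A B = ∫ z : ℝ, ∫ θ₂ in (0:ℝ)..(2 * π),
      ∫ θ₁ in (0:ℝ)..(2 * π), F A B θ₁ θ₂ z := by
    intro A B
    rw [hMF A B]
    have step1 : ∀ θ₂ : ℝ, (∫ θ₁ in (0:ℝ)..(2 * π), ∫ z : ℝ, F A B θ₁ θ₂ z)
        = ∫ z : ℝ, ∫ θ₁ in (0:ℝ)..(2 * π), F A B θ₁ θ₂ z := by
      intro θ₂
      have hint : Integrable (Function.uncurry fun θ₁ z => F A B θ₁ θ₂ z)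
          ((volume.restrict (Set.Ioc 0 (2 * π))).prod volume) := by
        apply MicroimageAux.aux_integrable hK (C := C)
        · refine Continuous.aestronglyMeasurable ?_
          show Continuous fun p : ℝ × ℝ => F A B p.1 θ₂ p.2
          simp only [hF]
          exact hcont.comp (by fun_prop)
        · intro p
          exact hC _
        · intro p hp
          exact hvan _ _ _ hp
      have := MeasureTheory.integral_integral_swap hint
      simp only [intervalIntegral.integral_of_le h2π] at this ⊢
      exact this
    simp only [step1]
    have sm1 : AEStronglyMeasurable
        (Function.uncurry fun θ₂ z => ∫ θ₁ in (0:ℝ)..(2 * π), F A B θ₁ θ₂ z)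
        ((volume.restrict (Set.Ioc 0 (2 * π))).prod volume) := by
      have : StronglyMeasurable fun p : ℝ × ℝ =>
          ∫ θ₁, F A B θ₁ p.1 p.2 ∂(volume.restrict (Set.Ioc (0:ℝ) (2 * π))) :=
        ((hFc A B).stronglyMeasurable).integral_prod_right'
      have heq : (Function.uncurry fun θ₂ z => ∫ θ₁ in (0:ℝ)..(2 * π), F A B θ₁ θ₂ z)
          = fun p : ℝ × ℝ =>
            ∫ θ₁, F A B θ₁ p.1 p.2 ∂(volume.restrict (Set.Ioc (0:ℝ) (2 * π))) := by
        funext p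
        rw [Function.uncurry, intervalIntegral.integral_of_le h2π]
      rw [heq]
      exact this.aestronglyMeasurable
    have hint2 : Integrable
        (Function.uncurry fun θ₂ z => ∫ θ₁ in (0:ℝ)..(2 * π), F A B θ₁ θ₂ z)
        ((volume.restrict (Set.Ioc 0 (2 * π))).prod volume) := by
      apply MicroimageAux.aux_integrable hK (C := C * (2 * π)) sm1
      · intro p
        have : ‖∫ θ₁ in (0:ℝ)..(2 * π), F A B θ₁ p.1 p.2‖ ≤ C * |2 * π - 0| :=
          intervalIntegral.norm_integral_le_of_norm_le_const fun x _ => hC _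
        simpa [abs_of_nonneg h2π, Function.uncurry] using this
      · intro p hp
        have hzero : ∀ θ₁ : ℝ, F A B θ₁ p.1 p.2 = 0 := fun θ₁ => hvan _ _ _ hp
        show (∫ θ₁ in (0:ℝ)..(2 * π), F A B θ₁ p.1 p.2) = 0
        simp [hzero]
    have := MeasureTheory.integral_integral_swap hint2
    simp only [intervalIntegral.integral_of_le h2π] at this ⊢
    exact this
  -- per-`z` identity between the two microimages
  have hz : ∀ z : ℝ, (∫ θ₂ in (0:ℝ)..(2 * π), ∫ θ₁ in (0:ℝ)..(2 * π), F R₁ R₂ θ₁ θ₂ z)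
      = ∫ θ₂ in (0:ℝ)..(2 * π), ∫ θ₁ in (0:ℝ)..(2 * π), F R₂ R₁ θ₁ θ₂ z := by
    intro z
    set b := MicroimageAux.bb z with hb
    have e1 : ∀ θ₁ θ₂ : ℝ, F R₁ R₂ θ₁ θ₂ z = F R₂ R₁ (θ₂ - b) (θ₁ + b) z := by
      intro θ₁ θ₂
      simp only [hF, hb]
      exact (MicroimageAux.key f R₁ R₂ θ₁ θ₂ z).symm
    simp only [e1]
    have hper : ∀ c : ℝ, Function.Periodic (fun θ : ℝ => F R₂ R₁ c θ z) (2 * π) := by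
      intro c θ
      simp [hF, Real.sin_add_two_pi, Real.cos_add_two_pi]
    have e2 : ∀ θ₂ : ℝ, (∫ θ₁ in (0:ℝ)..(2 * π), F R₂ R₁ (θ₂ - b) (θ₁ + b) z)
        = ∫ θ₁ in (0:ℝ)..(2 * π), F R₂ R₁ (θ₂ - b) θ₁ z := by
      intro θ₂
      exact MicroimageAux.shift (hper (θ₂ - b)) b
    simp only [e2]
    have hper2 : Function.Periodic (fun t : ℝ => ∫ θ₁ in (0:ℝ)..(2 * π), F R₂ R₁ t θ₁ z)
        (2 * π) := by
      intro t
      simp [hF, Real.sin_add_two_pi, Real.cos_add_two_pi]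
    have e3 : (∫ θ₂ in (0:ℝ)..(2 * π), ∫ θ₁ in (0:ℝ)..(2 * π), F R₂ R₁ (θ₂ - b) θ₁ z)
        = ∫ θ₂ in (0:ℝ)..(2 * π), ∫ θ₁ in (0:ℝ)..(2 * π), F R₂ R₁ θ₂ θ₁ z := by
      have := MicroimageAux.shift hper2 (-b)
      simpa [sub_eq_add_neg] using this
    rw [e3]
    have hint3 : Integrable (Function.uncurry fun a c => F R₂ R₁ a c z)
        ((volume.restrict (Set.Ioc (0:ℝ) (2 * π))).prod
          (volume.restrict (Set.Ioc (0:ℝ) (2 * π)))) := by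
      refine Integrable.mono' (integrable_const C) ?_ ?_
      · exact (hFc2 R₂ R₁ z).aestronglyMeasurable
      · filter_upwards with p
        exact hC _
    have := MeasureTheory.integral_integral_swap hint3
    simp only [intervalIntegral.integral_of_le h2π] at this ⊢
    exact this
  calc M R₁ R₂ = ∫ z : ℝ, ∫ θ₂ in (0:ℝ)..(2 * π), ∫ θ₁ in (0:ℝ)..(2 * π),
      F R₁ R₂ θ₁ θ₂ z := hswap R₁ R₂
    _ = ∫ z : ℝ, ∫ θ₂ in (0:ℝ)..(2 * π), ∫ θ₁ in (0:ℝ)..(2 * π),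
      F R₂ R₁ θ₁ θ₂ z := by simp only [hz]
    _ = M R₂ R₁ := (hswap R₂ R₁).symm
end
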